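/- Let G' be a graph with edge vw and G'' the graph obtained by subdividing vw three times. If every odd-dominating set D' of G' satisfies that neither D' nor V(G')∖D' is an independent set, then every odd-dominating set D'' of G'' satisfies that neither D'' nor V(G'')∖D'' is independent. Consequently, if additionally G'' has an odd-dominating set, χ_os(G'') ≥ 4. -/

import Mathlib

open SimpleGraph Finset
open scoped Classical

/-- The closed neighborhood `N[v]` of a vertex `v`. -/
def closedNbhd {V : Type*} (G : SimpleGraph V) (v : V) : Set V :=
  insert v (G.neighborSet v)

/-- `D` is an odd-dominating set: `|N[v] ∩ D|` is odd for every vertex `v`. -/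
def OddDomSet {V : Type*} (G : SimpleGraph V) (D : Set V) : Prop :=
  ∀ v, Odd ((closedNbhd G v ∩ D).ncard)

/-- `f` is an odd-sum coloring: a proper coloring with positive integer colors
such that the sum of colors over each closed neighborhood is odd. -/
def IsOddSumColoring {V : Type*} [Fintype V] (G : SimpleGraph V) (f : V → ℕ) : Prop :=
  (∀ v, 0 < f v) ∧ (∀ ⦃a b⦄, G.Adj a b → f a ≠ f b) ∧
  (∀ v, Odd (∑ w ∈ (closedNbhd G v).toFinset, f w))

/-- The odd-sum chromatic number: minimum number of colors used in an odd-sum coloring. -/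
noncomputable def chiOS {V : Type*} [Fintype V] (G : SimpleGraph V) : ℕ :=
  sInf {n | ∃ f : V → ℕ, IsOddSumColoring G f ∧ (Finset.univ.image f).card = n}

/-- The graph obtained from `G` by subdividing the edge `vw` three times:
delete `vw` and add a path `v, s₀, s₁, s₂, w` through three new vertices. -/
def subdiv3 {V : Type*} (G : SimpleGraph V) (v w : V) : SimpleGraph (V ⊕ Fin 3) :=
  SimpleGraph.fromRel (fun a b =>
    match a, b with
    | .inl x, .inl y => G.Adj x y ∧ ¬(x = v ∧ y = w) ∧ ¬(x = w ∧ y = v)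
    | .inl x, .inr i => (x = v ∧ i = 0) ∨ (x = w ∧ i = 2)
    | .inr i, .inr j => i.val + 1 = j.val
    | _, _ => False)

/-- `s` is an independent set in `G`. -/
def IndepSet {V : Type*} (G : SimpleGraph V) (s : Set V) : Prop :=
  ∀ x ∈ s, ∀ y ∈ s, ¬ G.Adj x y

/-!
On the path `v, s₀, s₁, s₂, w`, odd domination at `s₀, s₁, s₂` forces `s₀ ∈ D'' ↔ w ∈ D''` and
`s₂ ∈ D'' ↔ v ∈ D''`. Hence contracting the path (`s₀ ↦ w`, `s₂ ↦ v`) preserves every count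
`|N[x] ∩ D''|` for `x ∈ V`, so `D'' ∩ V` is odd-dominating in `G`. If `D''` or its complement
were independent, so would be its trace on `V`: the only edge of `G` that is lost is `vw`, and
if `v, w` lie on the same side then so does `s₀`, a neighbour of `v`.

For `χ_os`: in an odd-sum colouring the odd-coloured vertices form an odd-dominating set, so
both they and the even-coloured ones span an edge, which costs two odd and two even colours.
An odd-sum colouring exists as soon as an odd-dominating set does.
-/

lemma Set.mem_iff_mem_of_odd_ncard_insert_inter {α : Type*} {s D : Set α} {a b : α}
    (hs : s.Finite) (ha : a ∉ s) (hb : b ∉ s) (hodd_a : Odd (insert a s ∩ D).ncard)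
    (hodd_b : Odd (insert b s ∩ D).ncard) : a ∈ D ↔ b ∈ D := by
  have hsD := hs.inter_of_left D
  by_cases haD : a ∈ D <;> by_cases hbD : b ∈ D <;>
    simp_all [Set.insert_inter_of_mem, Set.insert_inter_of_notMem, Set.ncard_insert_of_notMem,
      Nat.odd_add_one, ← Nat.not_odd_iff_even]

lemma odd_sum_toFinset_iff_odd_ncard {α : Type*} [Fintype α] (s : Set α) (f : α → ℕ) :
    Odd (∑ x ∈ s.toFinset, f x) ↔ Odd (s ∩ {x | Odd (f x)}).ncard := by
  rw [Finset.odd_sum_iff_odd_card_odd, Set.ncard_eq_toFinset_card']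
  congr!
  ext
  simp

lemma mem_closedNbhd {V : Type*} {G : SimpleGraph V} {x y : V} :
    y ∈ closedNbhd G x ↔ y = x ∨ G.Adj x y := Iff.rfl

section Subdivision

variable {V : Type*} {G : SimpleGraph V} {v w : V}

@[simp]
lemma subdiv3_adj_inl_inl {x y : V} :
    (subdiv3 G v w).Adj (.inl x) (.inl y) ↔ G.Adj x y ∧ s(x, y) ≠ s(v, w) := by
  simp only [subdiv3, fromRel_adj, ne_eq, Sum.inl.injEq, Sym2.eq_iff]
  constructor
  · rintro ⟨-, h | h⟩ <;> refine ⟨?_, ?_⟩ <;> grind [G.adj_symm]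
  · rintro ⟨h, h'⟩
    exact ⟨h.ne, Or.inl ⟨h, by tauto, by tauto⟩⟩

@[simp]
lemma subdiv3_adj_inl_inr {x : V} {i : Fin 3} :
    (subdiv3 G v w).Adj (.inl x) (.inr i) ↔ x = v ∧ i = 0 ∨ x = w ∧ i = 2 := by
  simp [subdiv3]

@[simp]
lemma subdiv3_adj_inr_inl {x : V} {i : Fin 3} :
    (subdiv3 G v w).Adj (.inr i) (.inl x) ↔ x = v ∧ i = 0 ∨ x = w ∧ i = 2 := by
  rw [adj_comm, subdiv3_adj_inl_inr]

@[simp]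
lemma subdiv3_adj_inr_inr {i j : Fin 3} :
    (subdiv3 G v w).Adj (.inr i) (.inr j) ↔ i.val + 1 = j.val ∨ j.val + 1 = i.val := by
  simp only [subdiv3, fromRel_adj, ne_eq, Sum.inr.injEq, and_iff_right_iff_imp]
  omega

/-- Contraction of the path `v, s₀, s₁, s₂, w` onto the edge `vw`; the value at `s₁` is
irrelevant, since `s₁` lies in no closed neighbourhood of a vertex of `V`. -/
def subdiv3Contract (v w : V) : V ⊕ Fin 3 → V
  | .inl x => x
  | .inr i => if i = 0 then w else v

lemma image_subdiv3Contract_closedNbhd (hvw : G.Adj v w) (x : V) :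
    subdiv3Contract v w '' closedNbhd (subdiv3 G v w) (.inl x) = closedNbhd G x := by
  ext y
  simp only [Set.mem_image, Sum.exists, mem_closedNbhd, subdiv3_adj_inl_inl, subdiv3_adj_inl_inr,
    Sum.inl.injEq, reduceCtorEq, false_or, subdiv3Contract]
  constructor
  · rintro (⟨u, h, rfl⟩ | ⟨i, h, rfl⟩)
    · tauto
    · rcases h with ⟨rfl, rfl⟩ | ⟨rfl, rfl⟩
      · simp [hvw]
      · simp [hvw.symm]
  · rintro (rfl | hxy)
    · exact Or.inl ⟨_, Or.inl rfl, rfl⟩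
    · by_cases hvw' : s(x, y) = s(v, w)
      · right
        rcases Sym2.eq_iff.mp hvw' with ⟨rfl, rfl⟩ | ⟨rfl, rfl⟩
        · exact ⟨0, by simp⟩
        · exact ⟨2, by simp [hvw.ne']⟩
      · exact Or.inl ⟨y, Or.inr ⟨hxy, hvw'⟩, rfl⟩

lemma injOn_subdiv3Contract_closedNbhd (hvw : G.Adj v w) (x : V) :
    Set.InjOn (subdiv3Contract v w) (closedNbhd (subdiv3 G v w) (.inl x)) := by
  have hne := hvw.ne
  rintro (a | i) ha (b | j) hb h <;>
    simp only [mem_closedNbhd, subdiv3_adj_inl_inl, subdiv3_adj_inl_inr, subdiv3Contract,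
      Sum.inl.injEq, reduceCtorEq, false_or, Sum.inr.injEq] at ha hb h ⊢
  · exact h
  all_goals grind

lemma ncard_closedNbhd_subdiv3_inter (hvw : G.Adj v w) {D : Set (V ⊕ Fin 3)}
    (hv : .inl v ∈ D ↔ .inr 2 ∈ D) (hw : .inl w ∈ D ↔ .inr 0 ∈ D) (x : V) :
    (closedNbhd (subdiv3 G v w) (.inl x) ∩ D).ncard = (closedNbhd G x ∩ Sum.inl ⁻¹' D).ncard := by
  set N := closedNbhd (subdiv3 G v w) (.inl x)
  have hND : N ∩ D = N ∩ subdiv3Contract v w ⁻¹' (Sum.inl ⁻¹' D) := by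
    ext (u | i)
    · rfl
    · simp only [N, Set.mem_inter_iff, mem_closedNbhd, reduceCtorEq, subdiv3_adj_inl_inr,
        false_or, Set.mem_preimage, subdiv3Contract]
      constructor <;> rintro ⟨h | h, hD⟩ <;> obtain ⟨rfl, rfl⟩ := h <;> simp_all
  rw [hND, ← ((injOn_subdiv3Contract_closedNbhd hvw x).mono Set.inter_subset_left).ncard_image,
    Set.image_inter_preimage, image_subdiv3Contract_closedNbhd hvw]

lemma OddDomSet.subdiv3_mem_iff {D : Set (V ⊕ Fin 3)} (hD : OddDomSet (subdiv3 G v w) D) :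
    (.inl v ∈ D ↔ .inr 2 ∈ D) ∧ (.inl w ∈ D ↔ .inr 0 ∈ D) := by
  have hodd (i : Fin 3) {s : Set (V ⊕ Fin 3)} (hs : closedNbhd (subdiv3 G v w) (.inr i) = s) :
      Odd (s ∩ D).ncard := hs ▸ hD _
  refine ⟨Set.mem_iff_mem_of_odd_ncard_insert_inter (s := {.inr 0, .inr 1}) (Set.toFinite _)
      (by simp) (by simp) (hodd 0 ?_) (hodd 1 ?_),
    Set.mem_iff_mem_of_odd_ncard_insert_inter (s := {.inr 1, .inr 2}) (Set.toFinite _)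
      (by simp) (by simp) (hodd 2 ?_) (hodd 1 ?_)⟩
  all_goals ext (x | ⟨j, hj⟩) <;> simp [mem_closedNbhd, Fin.ext_iff]
  all_goals omega

lemma OddDomSet.of_subdiv3 (hvw : G.Adj v w) {D : Set (V ⊕ Fin 3)}
    (hD : OddDomSet (subdiv3 G v w) D) : OddDomSet G (Sum.inl ⁻¹' D) := fun x => by
  rw [← ncard_closedNbhd_subdiv3_inter hvw hD.subdiv3_mem_iff.1 hD.subdiv3_mem_iff.2]
  exact hD _

lemma IndepSet.preimage_inl_of_subdiv3 {S : Set (V ⊕ Fin 3)} (hS : IndepSet (subdiv3 G v w) S)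
    (hw : .inl w ∈ S ↔ .inr 0 ∈ S) : IndepSet G (Sum.inl ⁻¹' S) := by
  intro x hx y hy hxy
  by_cases hvw : s(x, y) = s(v, w)
  · rcases Sym2.eq_iff.mp hvw with ⟨rfl, rfl⟩ | ⟨rfl, rfl⟩
    · exact hS _ hx _ (hw.mp hy) (by simp)
    · exact hS _ hy _ (hw.mp hx) (by simp)
  · exact hS _ hx _ hy (by simp [hxy, hvw])

end Subdivision

section OddSum

variable {V : Type*} [Fintype V] {G : SimpleGraph V}

lemma IsOddSumColoring.oddDomSet {f : V → ℕ} (hf : IsOddSumColoring G f) :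
    OddDomSet G {x | Odd (f x)} := fun x =>
  (odd_sum_toFinset_iff_odd_ncard _ f).mp (hf.2.2 x)

lemma OddDomSet.exists_isOddSumColoring {D : Set V} (hD : OddDomSet G D) :
    ∃ f : V → ℕ, IsOddSumColoring G f := by
  let e := Fintype.equivFin V
  let f : V → ℕ := fun x => 2 * e x + if x ∈ D then 1 else 2
  have hf_odd : {x | Odd (f x)} = D := by
    ext x
    by_cases hx : x ∈ D <;> simp [f, hx, Nat.odd_add, Nat.odd_mul]
  have hf_inj : Function.Injective f := by
    intro x y hxy
    apply e.injective
    ext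
    simp only [f] at hxy
    split_ifs at hxy <;> omega
  refine ⟨f, fun x => by positivity, fun a b hab => hf_inj.ne hab.ne, fun x => ?_⟩
  rw [odd_sum_toFinset_iff_odd_ncard, hf_odd]
  exact hD x

lemma four_le_card_image_of_not_indepSet {f : V → ℕ} (hf : ∀ ⦃a b⦄, G.Adj a b → f a ≠ f b)
    (hodd : ¬ IndepSet G {x | Odd (f x)}) (heven : ¬ IndepSet G {x | Odd (f x)}ᶜ) :
    4 ≤ #(univ.image f) := by
  simp only [IndepSet, not_forall, not_not] at hodd heven
  obtain ⟨a, ha, b, hb, hab⟩ := hodd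
  obtain ⟨c, hc, d, hd, hcd⟩ := heven
  have hne {x y : V} (hx : Odd (f x)) (hy : ¬ Odd (f y)) : f x ≠ f y := fun h => hy (h ▸ hx)
  calc 4 = #({f a, f b} ∪ {f c, f d}) := by
        rw [card_union_of_disjoint, card_pair (hf hab), card_pair (hf hcd)]
        simp [(hne ha hc).symm, (hne ha hd).symm, (hne hb hc).symm, (hne hb hd).symm]
    _ ≤ #(univ.image f) := card_le_card (by simp [subset_iff])

lemma four_le_chiOS (hG : ∀ D : Set V, OddDomSet G D → ¬ IndepSet G D ∧ ¬ IndepSet G Dᶜ)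
    (hD : ∃ D : Set V, OddDomSet G D) : 4 ≤ chiOS G := by
  obtain ⟨D, hD⟩ := hD
  obtain ⟨f, hf⟩ := hD.exists_isOddSumColoring
  refine le_csInf ⟨_, f, hf, rfl⟩ ?_
  rintro n ⟨g, hg, rfl⟩
  exact four_le_card_image_of_not_indepSet hg.2.1 (hG _ hg.oddDomSet).1 (hG _ hg.oddDomSet).2

end OddSum

theorem subdiv3_not_indep_and_chiOS_ge_four {V : Type*} [Fintype V]
    (G : SimpleGraph V) (v w : V) (hvw : G.Adj v w)
    (hG : ∀ D : Set V, OddDomSet G D → ¬ IndepSet G D ∧ ¬ IndepSet G Dᶜ) :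
    (∀ D'' : Set (V ⊕ Fin 3), OddDomSet (subdiv3 G v w) D'' →
      ¬ IndepSet (subdiv3 G v w) D'' ∧ ¬ IndepSet (subdiv3 G v w) D''ᶜ) ∧
    ((∃ D'' : Set (V ⊕ Fin 3), OddDomSet (subdiv3 G v w) D'') →
      4 ≤ chiOS (subdiv3 G v w)) := by
  have hsubdiv : ∀ D'' : Set (V ⊕ Fin 3), OddDomSet (subdiv3 G v w) D'' →
      ¬ IndepSet (subdiv3 G v w) D'' ∧ ¬ IndepSet (subdiv3 G v w) D''ᶜ := by
    intro D hD
    have hw := hD.subdiv3_mem_iff.2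
    obtain ⟨hnot, hnot_compl⟩ := hG _ (hD.of_subdiv3 hvw)
    exact ⟨fun h => hnot (h.preimage_inl_of_subdiv3 hw),
      fun h => hnot_compl (h.preimage_inl_of_subdiv3 (not_congr hw))⟩
  exact ⟨hsubdiv, four_le_chiOS hsubdiv⟩
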